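/- Two dg Loday–Pirashvili modules (V, α) and (V, α') over g are homotopic if and only if there exists a family of linear maps h = {h_k : V^k ⊗ ∧^{k−1} g → g}_{1 ≤ k ≤ u+1} such that for all k, v ∈ V^k and x_1,…,x_k ∈ g: (α'_k − α_k)(v | x_1,…,x_k) = Σ_{i=1}^k (−1)^{i+1} [x_i, h_k(v | x_1,…,x̂_i,…,x_k)]_g + Σ_{i<j} (−1)^{i+j} h_k(v | [x_i,x_j]_g, x_1,…,x̂_i,…,x̂_j,…,x_k) + Σ_{i=1}^k (−1)^i h_k(x_i ▷ v | x_1,…,x̂_i,…,x_k) + h_{k+1}(d^V_k v | x_1,…,x_k). -/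

import Mathlib

/-!
The target `g` (degree 0, adjoint action) is modelled by a family `Wg` concentrated in degree 0
with an equivariant identification `e0 : Wg 0 ≃ g`; the weak morphisms `α, α'` are given
componentwise by `F, F'`, compatible with the families `A, A'`, and "homotopic" is the
componentwise relation `IsHomotopy`. `Hh l` encodes `h_{l+1}`, and arguments are indexed from 0.

Since `g` sits in degree 0 with zero differential, a homotopy `Ω_g(V) → Ω_g(g)` only has
components `V^{l+1} → C^l(g; g)` landing in degree 0 (the others may be taken to be zero), and
the term `d^g ∘ h` vanishes. The homotopy relation in degree 0 is then exactly the explicit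
identity, once the Chevalley–Eilenberg differential of `h_k(v | ·)` is written in its textbook
form `ceDiff`. Passing to it from the form fixed by `IsCEDiff` moves `[x_i, x_j]` from slot
`j - 1` to the front, at the price of the sign of a cycle.
-/

open scoped BigOperators

section Prelude

variable (K g : Type) [Field K] [CharZero K] [LieRing g] [LieAlgebra K g]

abbrev CEc (p : ℕ) (M : Type) [AddCommGroup M] [Module K M] : Type :=
  g [⋀^Fin p]→ₗ[K] M

def IsCEDiff {M : Type} [AddCommGroup M] [Module K M] [LieRingModule g M]
    (D : ∀ p : ℕ, CEc K g p M →ₗ[K] CEc K g (p+1) M) : Prop :=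
  ∀ (p : ℕ) (ω : CEc K g p M) (xs : Fin (p+1) → g),
    D p ω xs = ∑ i : Fin (p+1), ((-1 : ℤ)^(i : ℕ)) •
      (⁅xs i, ω (xs ∘ i.succAbove)⁆
        - ∑ j : Fin p, if (i : ℕ) ≤ (j : ℕ) then
            ω (Function.update (xs ∘ i.succAbove) j ⁅xs i, xs (i.succAbove j)⁆)
          else 0)

variable {K g}
variable (V W : ℤ → Type)
  [∀ i, AddCommGroup (V i)] [∀ i, Module K (V i)]
  [∀ i, LieRingModule g (V i)] [∀ i, LieModule K g (V i)]
  [∀ i, AddCommGroup (W i)] [∀ i, Module K (W i)]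
  [∀ i, LieRingModule g (W i)] [∀ i, LieModule K g (W i)]

def IsWeakMor
    (dV : ∀ i j : ℤ, j = i + 1 → (V i →ₗ[K] V j))
    (dW : ∀ i j : ℤ, j = i + 1 → (W i →ₗ[K] W j))
    (DW : ∀ (s : ℤ) (p : ℕ), CEc K g p (W s) →ₗ[K] CEc K g (p+1) (W s))
    (F : ∀ (l : ℕ) (s k : ℤ), s + l = k → (V k →ₗ[K] CEc K g l (W s))) : Prop :=
  (∀ (k k' : ℤ) (hk : k' = k + 1) (h1 : k' + ((0:ℕ):ℤ) = k') (h2 : k + ((0:ℕ):ℤ) = k)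
      (v : V k),
    F 0 k' k' h1 (dV k k' hk v)
      = (dW k k' hk).compAlternatingMap (F 0 k k h2 v)) ∧
  (∀ (m : ℕ) (s k k' : ℤ) (hk : k' = k + 1)
      (h1 : s + ((m+1 : ℕ):ℤ) = k') (h2 : s + ((m : ℕ):ℤ) = k)
      (h3 : (s-1) + ((m+1 : ℕ):ℤ) = k) (hs : s = (s-1) + 1)
      (v : V k) (xs : Fin (m+1) → g),
    F (m+1) s k' h1 (dV k k' hk v) xs
      + ∑ i : Fin (m+1), ((-1 : ℤ)^(i : ℕ)) •
          (F m s k h2 ⁅xs i, v⁆) (xs ∘ i.succAbove)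
    = DW s m (F m s k h2 v) xs
      + ((-1 : ℤ)^(m+1)) • dW (s-1) s hs ((F (m+1) (s-1) k h3 v) xs))

def IsHomotopy
    (dV : ∀ i j : ℤ, j = i + 1 → (V i →ₗ[K] V j))
    (dW : ∀ i j : ℤ, j = i + 1 → (W i →ₗ[K] W j))
    (DW : ∀ (s : ℤ) (p : ℕ), CEc K g p (W s) →ₗ[K] CEc K g (p+1) (W s))
    (F F' : ∀ (l : ℕ) (s k : ℤ), s + l = k → (V k →ₗ[K] CEc K g l (W s)))
    (H : ∀ (l : ℕ) (s k : ℤ), s + l + 1 = k → (V k →ₗ[K] CEc K g l (W s))) : Prop :=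
  (∀ (k k' : ℤ) (hk : k' = k + 1) (h0 : k + ((0:ℕ):ℤ) = k)
      (h1 : (k-1) + ((0:ℕ):ℤ) + 1 = k) (h2 : k + ((0:ℕ):ℤ) + 1 = k')
      (hs : k = (k-1) + 1) (v : V k),
    F' 0 k k h0 v
      = F 0 k k h0 v
        + (dW (k-1) k hs).compAlternatingMap (H 0 (k-1) k h1 v)
        + H 0 k k' h2 (dV k k' hk v)) ∧
  (∀ (m : ℕ) (s k k' : ℤ) (hk : k' = k + 1)
      (h0 : s + ((m+1 : ℕ):ℤ) = k) (hm : s + ((m : ℕ):ℤ) + 1 = k)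
      (h3 : (s-1) + ((m+1 : ℕ):ℤ) + 1 = k) (hs : s = (s-1) + 1)
      (h4 : s + ((m+1 : ℕ):ℤ) + 1 = k')
      (v : V k) (xs : Fin (m+1) → g),
    F' (m+1) s k h0 v xs
      = F (m+1) s k h0 v xs
        + DW s m (H m s k hm v) xs
        + ((-1 : ℤ)^(m+1)) • dW (s-1) s hs ((H (m+1) (s-1) k h3 v) xs)
        + H (m+1) s k' h4 (dV k k' hk v) xs
        - ∑ i : Fin (m+1), ((-1 : ℤ)^(i : ℕ)) •
            (H m s k hm ⁅xs i, v⁆) (xs ∘ i.succAbove))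

end Prelude

lemma Fin.val_succAbove_eq_ite {m : ℕ} (i : Fin (m+1)) (t : Fin m) :
    (i.succAbove t : ℕ) = if (t : ℕ) < i then (t : ℕ) else (t : ℕ) + 1 := by
  rw [Fin.succAbove]
  split_ifs <;> simp_all [Fin.lt_def]

lemma AlternatingMap.map_comp_cycleRange {R M N : Type*} [CommSemiring R]
    [AddCommMonoid M] [Module R M] [AddCommGroup N] [Module R N] {m : ℕ} [NeZero m]
    (f : M [⋀^Fin m]→ₗ[R] N) (w : Fin m → M) (j : Fin m) :
    f (w ∘ j.cycleRange) = ((-1 : ℤ) ^ (j : ℕ)) • f w := by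
  rw [f.map_perm, Fin.sign_cycleRange, Units.smul_def, Units.val_pow_eq_pow_val,
    Units.val_neg, Units.val_one]

section ChevalleyEilenberg

variable {K g : Type} [Field K] [LieRing g] [LieAlgebra K g]

lemma bracketFront_index_lt {m : ℕ} (t : Fin m) (i j : ℕ) :
    (if (t:ℕ) - 1 < i then (t:ℕ) - 1 else if (t:ℕ) < j then (t:ℕ) else (t:ℕ) + 1) < m + 1 := by
  have := t.isLt
  split_ifs <;> omega

/-- `([x_i, x_j], x_0, …, x̂_i, …, x̂_j, …, x_m)` when `i < j`. -/
def bracketFront {m : ℕ} (xs : Fin (m+1) → g) (i j : Fin (m+1)) : Fin m → g :=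
  fun t => if (t : ℕ) = 0 then ⁅xs i, xs j⁆
    else xs ⟨if (t:ℕ) - 1 < (i:ℕ) then (t:ℕ) - 1
             else if (t:ℕ) < (j:ℕ) then (t:ℕ)
             else (t:ℕ) + 1,
             bracketFront_index_lt t i j⟩

lemma bracketFront_succ_comp_cycleRange {m : ℕ} (xs : Fin (m+2) → g) (i : Fin (m+2))
    (j : Fin (m+1)) (hij : (i : ℕ) ≤ j) :
    bracketFront xs i j.succ ∘ j.cycleRange
      = Function.update (xs ∘ i.succAbove) j ⁅xs i, xs (i.succAbove j)⁆ := by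
  funext t
  rcases lt_trichotomy t j with htj | rfl | htj
  · have h1 : (j.cycleRange t : ℕ) = t + 1 := Fin.coe_cycleRange_of_lt htj
    simp only [Function.comp_apply, bracketFront, h1, Function.update_of_ne (ne_of_lt htj),
      Nat.add_one_ne_zero, if_false]
    have htj : (t : ℕ) < j := htj
    congr 1
    apply Fin.ext
    simp only [Fin.val_succAbove_eq_ite, Fin.val_succ]
    split_ifs <;> omega
  · simp only [Function.comp_apply, bracketFront, Fin.cycleRange_self, Fin.val_zero,
      Function.update_self, if_true]
    congr 2
    apply Fin.ext
    simp only [Fin.val_succAbove_eq_ite, Fin.val_succ]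
    split_ifs <;> omega
  · have htj' : (j : ℕ) < t := htj
    simp only [Function.comp_apply, bracketFront, Fin.cycleRange_of_gt htj,
      Function.update_of_ne (ne_of_gt htj), show (t : ℕ) ≠ 0 by omega, if_false]
    congr 1
    apply Fin.ext
    simp only [Fin.val_succAbove_eq_ite, Fin.val_succ]
    split_ifs <;> omega

variable {M : Type} [AddCommGroup M] [Module K M] [LieRingModule g M]

def ceDiff {m : ℕ} (ω : CEc K g m M) (xs : Fin (m+1) → g) : M :=
  (∑ i : Fin (m+1), ((-1 : ℤ)^(i : ℕ)) • ⁅xs i, ω (xs ∘ i.succAbove)⁆)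
    + ∑ i : Fin (m+1), ∑ j : Fin (m+1),
        if _ : (i : ℕ) < (j : ℕ) then
          ((-1 : ℤ)^((i:ℕ)+(j:ℕ))) • ω (bracketFront xs i j)
        else 0

lemma ceDiff_eq_sum_update {m : ℕ} (ω : CEc K g m M) (xs : Fin (m+1) → g) :
    ceDiff ω xs = ∑ i : Fin (m+1), ((-1 : ℤ)^(i : ℕ)) •
      (⁅xs i, ω (xs ∘ i.succAbove)⁆
        - ∑ j : Fin m, if (i : ℕ) ≤ (j : ℕ) then
            ω (Function.update (xs ∘ i.succAbove) j ⁅xs i, xs (i.succAbove j)⁆)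
          else 0) := by
  simp only [ceDiff, smul_sub]
  rw [Finset.sum_sub_distrib, sub_eq_add_neg, ← Finset.sum_neg_distrib]
  congr 1
  refine Finset.sum_congr rfl fun i _ => ?_
  rcases m with _ | m
  · simp
  rw [Fin.sum_univ_succ, dif_neg (by simp), zero_add, Finset.smul_sum, ← Finset.sum_neg_distrib]
  refine Finset.sum_congr rfl fun j _ => ?_
  by_cases hij : (i : ℕ) ≤ j
  · rw [dif_pos (by simp only [Fin.val_succ]; omega), if_pos hij,
      ← bracketFront_succ_comp_cycleRange xs i j hij, ω.map_comp_cycleRange, smul_smul,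
      ← neg_smul, Fin.val_succ]
    congr 1
    ring
  · rw [dif_neg (by simp only [Fin.val_succ]; omega), if_neg hij, smul_zero, neg_zero]

lemma IsCEDiff.apply_eq_ceDiff {D : ∀ p : ℕ, CEc K g p M →ₗ[K] CEc K g (p+1) M}
    (hD : IsCEDiff K g D) {m : ℕ} (ω : CEc K g m M) (xs : Fin (m+1) → g) :
    D m ω xs = ceDiff ω xs := by
  rw [hD, ceDiff_eq_sum_update]

lemma map_ceDiff {N : Type} [AddCommGroup N] [Module K N] [LieRingModule g N]
    (f : M →ₗ[K] N) (hf : ∀ (x : g) (w : M), f ⁅x, w⁆ = ⁅x, f w⁆)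
    {m : ℕ} (ω : CEc K g m M) (xs : Fin (m+1) → g) :
    f (ceDiff ω xs) = ceDiff (f.compAlternatingMap ω) xs := by
  simp only [ceDiff, map_add, map_sum, map_zsmul, hf, apply_dite f, map_zero,
    LinearMap.compAlternatingMap_apply]

lemma IsCEDiff.homotopy_component_iff (e : M ≃ₗ[K] g)
    (he : ∀ (x : g) (w : M), e ⁅x, w⁆ = ⁅x, e w⁆)
    {D : ∀ p : ℕ, CEc K g p M →ₗ[K] CEc K g (p+1) M} (hD : IsCEDiff K g D) {m : ℕ}
    (f f' η : M) (ω : CEc K g m M) (u : Fin (m+1) → M) (xs : Fin (m+1) → g) :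
    f' = f + D m ω xs + η - ∑ i : Fin (m+1), ((-1 : ℤ)^(i : ℕ)) • u i ↔
      e f' - e f = ceDiff (e.toLinearMap.compAlternatingMap ω) xs
        + (∑ i : Fin (m+1), ((-1 : ℤ)^((i:ℕ)+1)) • e (u i)) + e η := by
  have hsign : ∑ i : Fin (m+1), ((-1 : ℤ)^((i:ℕ)+1)) • e (u i)
      = -∑ i : Fin (m+1), ((-1 : ℤ)^(i : ℕ)) • e (u i) := by
    simp only [pow_succ, mul_neg_one, neg_smul, Finset.sum_neg_distrib]
  rw [← e.injective.eq_iff, hsign, sub_eq_iff_eq_add]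
  have hce : e (ceDiff ω xs) = ceDiff (e.toLinearMap.compAlternatingMap ω) xs :=
    map_ceDiff e.toLinearMap he ω xs
  simp only [map_add, map_sub, map_sum, map_zsmul, hD.apply_eq_ceDiff, hce]
  constructor <;> intro h <;> rw [h] <;> abel

end ChevalleyEilenberg

section Homotopy

variable {K g : Type} [Field K] [LieRing g] [LieAlgebra K g]
  {V : ℤ → Type} [∀ i, AddCommGroup (V i)] [∀ i, Module K (V i)]
  {Wg : ℤ → Type} [∀ i, AddCommGroup (Wg i)] [∀ i, Module K (Wg i)] (e0 : Wg 0 ≃ₗ[K] g)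

def liftHomotopy (Hh : ∀ l : ℕ, V ((l+1 : ℕ):ℤ) →ₗ[K] CEc K g l g) :
    ∀ (l : ℕ) (s k : ℤ), s + l + 1 = k → (V k →ₗ[K] CEc K g l (Wg s)) :=
  fun l s k hk => if hs : s = 0 then by
      subst hs
      obtain rfl : k = ((l+1 : ℕ):ℤ) := by omega
      exact (e0.symm.toLinearMap.compAlternatingMapₗ K) ∘ₗ Hh l
    else 0

lemma compAlternatingMap_liftHomotopy_zero (Hh : ∀ l : ℕ, V ((l+1 : ℕ):ℤ) →ₗ[K] CEc K g l g)
    (l : ℕ) (h : (0:ℤ) + l + 1 = ((l+1 : ℕ):ℤ)) (v : V ((l+1 : ℕ):ℤ)) :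
    e0.toLinearMap.compAlternatingMap (liftHomotopy e0 Hh l 0 ((l+1 : ℕ):ℤ) h v) = Hh l v := by
  ext xs
  simp [liftHomotopy]

lemma liftHomotopy_zero_apply (Hh : ∀ l : ℕ, V ((l+1 : ℕ):ℤ) →ₗ[K] CEc K g l g) (l : ℕ)
    (h : (0:ℤ) + l + 1 = ((l+1 : ℕ):ℤ)) (v : V ((l+1 : ℕ):ℤ)) (xs : Fin l → g) :
    e0 (liftHomotopy e0 Hh l 0 ((l+1 : ℕ):ℤ) h v xs) = Hh l v xs :=
  congrArg (· xs) (compAlternatingMap_liftHomotopy_zero e0 Hh l h v)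

def restrictHomotopy (H : ∀ (l : ℕ) (s k : ℤ), s + l + 1 = k → (V k →ₗ[K] CEc K g l (Wg s)))
    (l : ℕ) : V ((l+1 : ℕ):ℤ) →ₗ[K] CEc K g l g :=
  (e0.toLinearMap.compAlternatingMapₗ K) ∘ₗ H l 0 ((l+1 : ℕ):ℤ) (by omega)

variable [∀ i, LieRingModule g (V i)] (dV : ∀ i j : ℤ, j = i + 1 → (V i →ₗ[K] V j))

def IsExplicitHomotopy (A A' : ∀ l : ℕ, V (l:ℤ) →ₗ[K] CEc K g l g)
    (Hh : ∀ l : ℕ, V ((l+1 : ℕ):ℤ) →ₗ[K] CEc K g l g) : Prop :=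
  (∀ (hk : ((1 : ℕ):ℤ) = ((0:ℕ):ℤ) + 1) (v : V ((0:ℕ):ℤ)),
    A' 0 v = A 0 v + Hh 0 (dV ((0:ℕ):ℤ) ((1:ℕ):ℤ) hk v)) ∧
  (∀ (m : ℕ) (hk : ((m+2 : ℕ):ℤ) = ((m+1 : ℕ):ℤ) + 1)
      (v : V ((m+1 : ℕ):ℤ)) (xs : Fin (m+1) → g),
    A' (m+1) v xs - A (m+1) v xs
      = ceDiff (Hh m v) xs
        + (∑ i : Fin (m+1), ((-1 : ℤ)^((i:ℕ)+1)) • Hh m ⁅xs i, v⁆ (xs ∘ i.succAbove))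
        + Hh (m+1) (dV ((m+1:ℕ):ℤ) ((m+2:ℕ):ℤ) hk v) xs)

variable [∀ i, LieRingModule g (Wg i)] {dWg : ∀ i j : ℤ, j = i + 1 → (Wg i →ₗ[K] Wg j)}
  {DWg : ∀ (s : ℤ) (p : ℕ), CEc K g p (Wg s) →ₗ[K] CEc K g (p+1) (Wg s)}
  {A A' : ∀ l : ℕ, V (l:ℤ) →ₗ[K] CEc K g l g}
  {F F' : ∀ (l : ℕ) (s k : ℤ), s + l = k → (V k →ₗ[K] CEc K g l (Wg s))}

lemma IsHomotopy.isExplicitHomotopy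
    (hdWg : ∀ (i j : ℤ) (h : j = i + 1) (w : Wg i), dWg i j h w = 0)
    (he0 : ∀ (x : g) (w : Wg 0), e0 ⁅x, w⁆ = ⁅x, e0 w⁆) (hDWg : IsCEDiff K g (DWg 0))
    (hcompat : ∀ (l : ℕ) (h : (0:ℤ) + ((l:ℕ):ℤ) = (l:ℤ)) (v : V (l:ℤ))
      (xs : Fin l → g), e0 (F l 0 (l:ℤ) h v xs) = A l v xs)
    (hcompat' : ∀ (l : ℕ) (h : (0:ℤ) + ((l:ℕ):ℤ) = (l:ℤ)) (v : V (l:ℤ))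
      (xs : Fin l → g), e0 (F' l 0 (l:ℤ) h v xs) = A' l v xs)
    {H : ∀ (l : ℕ) (s k : ℤ), s + l + 1 = k → (V k →ₗ[K] CEc K g l (Wg s))}
    (hH : IsHomotopy V Wg dV dWg DWg F F' H) :
    IsExplicitHomotopy dV A A' (restrictHomotopy e0 H) := by
  refine ⟨fun hk v => ?_, fun m hk v xs => ?_⟩
  · ext xs
    have E := congrArg (fun f => e0 (f xs))
      (hH.1 _ _ hk (by omega) (by omega) (by omega) (by omega) v)
    simp only [AlternatingMap.add_apply, LinearMap.compAlternatingMap_apply, map_add, hdWg,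
      add_zero] at E
    rw [AlternatingMap.add_apply, ← hcompat 0 (by omega) v xs, ← hcompat' 0 (by omega) v xs]
    exact E
  · have E := hH.2 m 0 _ _ hk (by omega) (by omega) (by omega) (by omega) (by omega) v xs
    simp only [hdWg, smul_zero, add_zero] at E
    rw [← hcompat' (m+1) (by omega), ← hcompat (m+1) (by omega)]
    exact (hDWg.homotopy_component_iff e0 he0 _ _ _ _ _ xs).mp E

lemma IsExplicitHomotopy.isHomotopy_liftHomotopy
    (hWg0 : ∀ i : ℤ, i ≠ 0 → Subsingleton (Wg i))
    (hdWg : ∀ (i j : ℤ) (h : j = i + 1) (w : Wg i), dWg i j h w = 0)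
    (he0 : ∀ (x : g) (w : Wg 0), e0 ⁅x, w⁆ = ⁅x, e0 w⁆) (hDWg : IsCEDiff K g (DWg 0))
    (hcompat : ∀ (l : ℕ) (h : (0:ℤ) + ((l:ℕ):ℤ) = (l:ℤ)) (v : V (l:ℤ))
      (xs : Fin l → g), e0 (F l 0 (l:ℤ) h v xs) = A l v xs)
    (hcompat' : ∀ (l : ℕ) (h : (0:ℤ) + ((l:ℕ):ℤ) = (l:ℤ)) (v : V (l:ℤ))
      (xs : Fin l → g), e0 (F' l 0 (l:ℤ) h v xs) = A' l v xs)
    {Hh : ∀ l : ℕ, V ((l+1 : ℕ):ℤ) →ₗ[K] CEc K g l g} (hHh : IsExplicitHomotopy dV A A' Hh) :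
    IsHomotopy V Wg dV dWg DWg F F' (liftHomotopy e0 Hh) := by
  refine ⟨fun k k' hk h0 h1 h2 hs v => ?_, fun m s k k' hk h0 hm h3 hs h4 v xs => ?_⟩
  · rcases eq_or_ne k 0 with rfl | hk0
    · obtain rfl : k' = ((0+1 : ℕ):ℤ) := by omega
      ext xs
      apply e0.injective
      simp only [AlternatingMap.add_apply, map_add, LinearMap.compAlternatingMap_apply, hdWg,
        add_zero]
      have E := congrArg (· xs) (hHh.1 hk v)
      rw [AlternatingMap.add_apply, ← hcompat 0 h0 v xs, ← hcompat' 0 h0 v xs,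
        ← liftHomotopy_zero_apply e0 Hh 0 h2] at E
      exact E
    · have := hWg0 k hk0
      ext xs
      exact Subsingleton.elim _ _
  · rcases eq_or_ne s 0 with rfl | hs0
    · obtain rfl : k = ((m+1 : ℕ):ℤ) := by omega
      obtain rfl : k' = ((m+1+1 : ℕ):ℤ) := by omega
      rw [hdWg, smul_zero, add_zero, hDWg.homotopy_component_iff e0 he0,
        hcompat (m+1) h0 v xs, hcompat' (m+1) h0 v xs, compAlternatingMap_liftHomotopy_zero]
      simp only [liftHomotopy_zero_apply]
      exact hHh.2 m hk v xs
    · have := hWg0 s hs0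
      exact Subsingleton.elim _ _

end Homotopy

/-- Two dg Loday–Pirashvili modules `(V, α)` and `(V, α')`
are homotopic if and only if there exists a family
`h = {h_k : V^k ⊗ ∧^{k-1} g → g}_{1 ≤ k}` (encoded by `Hh`, with
`Hh l = h_{l+1}`) such that for all `k`, `v ∈ V^k`, `x_0, …, x_{k-1} ∈ g`:

`(α'_k - α_k)(v | x_0,…,x_{k-1})
  = Σ_i (-1)^i [x_i, h_k(v|…x̂_i…)]
    + Σ_{i<j} (-1)^{i+j} h_k(v | [x_i,x_j], …x̂_i…x̂_j…)
    + Σ_i (-1)^{i+1} h_k(x_i ▷ v|…x̂_i…)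
    + h_{k+1}(d^V v | x_0,…,x_{k-1})`. -/
theorem statement4
    (K g : Type) [Field K] [LieRing g] [LieAlgebra K g]
    (V : ℤ → Type) [∀ i, AddCommGroup (V i)] [∀ i, Module K (V i)]
    [∀ i, LieRingModule g (V i)]
    (dV : ∀ i j : ℤ, j = i + 1 → (V i →ₗ[K] V j))
    (Wg : ℤ → Type) [∀ i, AddCommGroup (Wg i)] [∀ i, Module K (Wg i)]
    [∀ i, LieRingModule g (Wg i)]
    (hWg0 : ∀ i : ℤ, i ≠ 0 → Subsingleton (Wg i))
    (dWg : ∀ i j : ℤ, j = i + 1 → (Wg i →ₗ[K] Wg j))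
    (hdWg : ∀ (i j : ℤ) (h : j = i + 1) (w : Wg i), dWg i j h w = 0)
    (e0 : Wg 0 ≃ₗ[K] g)
    (he0 : ∀ (x : g) (w : Wg 0), e0 ⁅x, w⁆ = ⁅x, e0 w⁆)
    (DWg : ∀ (s : ℤ) (p : ℕ), CEc K g p (Wg s) →ₗ[K] CEc K g (p+1) (Wg s))
    (hDWg : ∀ s : ℤ, IsCEDiff K g (DWg s))
    -- the two dg Loday–Pirashvili structures, as families and as weak morphisms
    (A A' : ∀ l : ℕ, V (l:ℤ) →ₗ[K] CEc K g l g)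
    (F F' : ∀ (l : ℕ) (s k : ℤ), s + l = k → (V k →ₗ[K] CEc K g l (Wg s)))
    (hcompat : ∀ (l : ℕ) (h : (0:ℤ) + ((l:ℕ):ℤ) = (l:ℤ)) (v : V (l:ℤ))
      (xs : Fin l → g), e0 (F l 0 (l:ℤ) h v xs) = A l v xs)
    (hcompat' : ∀ (l : ℕ) (h : (0:ℤ) + ((l:ℕ):ℤ) = (l:ℤ)) (v : V (l:ℤ))
      (xs : Fin l → g), e0 (F' l 0 (l:ℤ) h v xs) = A' l v xs) :
    -- `(V,α)` and `(V,α')` are homotopic …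
    (∃ H : ∀ (l : ℕ) (s k : ℤ), s + l + 1 = k → (V k →ₗ[K] CEc K g l (Wg s)),
      IsHomotopy V Wg dV dWg DWg F F' H)
      ↔
    -- … iff there is a family `h_k` satisfying the explicit identities
    (∃ Hh : ∀ l : ℕ, V ((l+1 : ℕ):ℤ) →ₗ[K] CEc K g l g,
      -- the `k = 0` identity: `α'_0 - α_0 = h_1 ∘ d^V`
      (∀ (hk : ((1 : ℕ):ℤ) = ((0:ℕ):ℤ) + 1) (v : V ((0:ℕ):ℤ)),
        A' 0 v = A 0 v + Hh 0 (dV ((0:ℕ):ℤ) ((1:ℕ):ℤ) hk v)) ∧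
      -- the identity for `k = m+1 ≥ 1`
      (∀ (m : ℕ) (hk : ((m+2 : ℕ):ℤ) = ((m+1 : ℕ):ℤ) + 1)
          (v : V ((m+1 : ℕ):ℤ)) (xs : Fin (m+1) → g),
        A' (m+1) v xs - A (m+1) v xs
          = (∑ i : Fin (m+1), ((-1 : ℤ)^(i : ℕ)) •
              ⁅xs i, Hh m v (xs ∘ i.succAbove)⁆)
            + (∑ i : Fin (m+1), ∑ j : Fin (m+1),
                if hij : (i : ℕ) < (j : ℕ) then
                  ((-1 : ℤ)^((i:ℕ)+(j:ℕ))) • Hh m v (fun t : Fin m =>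
                    if (t : ℕ) = 0 then ⁅xs i, xs j⁆
                    else xs ⟨if (t:ℕ) - 1 < (i:ℕ) then (t:ℕ) - 1
                             else if (t:ℕ) < (j:ℕ) then (t:ℕ)
                             else (t:ℕ) + 1,
                             by have := t.isLt; split_ifs <;> omega⟩)
                else 0)
            + (∑ i : Fin (m+1), ((-1 : ℤ)^((i:ℕ)+1)) •
                Hh m ⁅xs i, v⁆ (xs ∘ i.succAbove))
            + Hh (m+1) (dV ((m+1:ℕ):ℤ) ((m+2:ℕ):ℤ) hk v) xs)) := by
  constructor
  · rintro ⟨H, hH⟩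
    exact ⟨restrictHomotopy e0 H, hH.isExplicitHomotopy e0 dV hdWg he0 (hDWg 0) hcompat hcompat'⟩
  · rintro ⟨Hh, hHh⟩
    exact ⟨liftHomotopy e0 Hh, IsExplicitHomotopy.isHomotopy_liftHomotopy e0 dV hWg0 hdWg he0
      (hDWg 0) hcompat hcompat' hHh⟩
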